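/- arXiv:1806.07023 — 3 statements merged into one kernel-verified Lean document; each statement's English description precedes it below -/
import Mathlib

section
/- Let φ be a skew-morphism of a finite group A of order n with power function π, and let Core φ = ∩_{i=1}^{n} φ^i(Ker φ). For x ∈ A, the following are equivalent: (i) φ(x) ≡ x (mod Core φ), i.e. φ(x)x^{-1} ∈ Core φ; (ii) π(φ^i(x)) = π(x) for all nonnegative integers i; (iii) the image of x in A/Core φ is fixed by the induced skew-morphism on A/Core φ. -/
/-- A skew-morphism of a group `A`: a permutation `φ` fixing the identity together with
a power function `pi` (a natural-number representative of the `ℤ_n`-valued power function,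
`n = orderOf φ`) such that `φ (x * y) = φ x * φ ^ (pi x) y`. -/
structure SkewMorphism (A : Type*) [Group A] where
  toPerm : Equiv.Perm A
  pi : A → ℕ
  map_one' : toPerm 1 = 1
  skew : ∀ x y : A, toPerm (x * y) = toPerm x * (toPerm ^ pi x) y

/-- The kernel of a skew-morphism: elements where the power function is `1` in `ℤ_n`. -/
def SkewMorphism.ker {A : Type*} [Group A] (S : SkewMorphism A) : Set A :=
  {x : A | S.pi x ≡ 1 [MOD orderOf S.toPerm]}

/-- The core of a skew-morphism: `⋂_{i=1}^{n} φ^i (Ker φ)`. -/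
def SkewMorphism.core {A : Type*} [Group A] (S : SkewMorphism A) : Set A :=
  ⋂ i ∈ Finset.Icc 1 (orderOf S.toPerm), (S.toPerm ^ i) '' S.ker

/-!
Write `σ(x, k) = π(x) + π(φ x) + ⋯ + π(φ^(k-1) x)` (`SkewMorphism.totalPower`), so that
`φ^k (x * y) = φ^k x * φ^σ(x, k) y`. The power function is constant modulo `n` exactly on the
right cosets of `Ker φ`, and `Core φ` consists of the elements whose whole `φ`-orbit lies in
`Ker φ`; for `a` in the core `σ(a, k) ≡ k`, so `φ^k (a * y) = φ^k a * φ^k y`, which makes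
`Core φ` a normal subgroup. Moreover
`φ^i (φ x * x⁻¹) = φ^(i+1) x * (φ^i x)⁻¹` as soon as `σ(φ x, i) ≡ σ(x, i)`, which makes
(i) ⟺ (ii) an induction along the orbit of `x`: `φ^i (φ x * x⁻¹) ∈ Ker φ` says exactly that
`π(φ^(i+1) x) ≡ π(φ^i x)`. Finally (iii) is the left-coset form `x⁻¹ * φ x ∈ Core φ` of (i),
equivalent to it by normality.
-/

namespace SkewMorphism

variable {A : Type*} [Group A] (S : SkewMorphism A)

def totalPower (k : ℕ) (x : A) : ℕ :=
  ∑ i ∈ Finset.range k, S.pi ((S.toPerm ^ i) x)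

lemma totalPower_succ (k : ℕ) (x : A) :
    S.totalPower (k + 1) x = S.totalPower k x + S.pi ((S.toPerm ^ k) x) :=
  Finset.sum_range_succ _ k

lemma totalPower_one (x : A) : S.totalPower 1 x = S.pi x := by
  simp [totalPower]

lemma pow_apply_one (k : ℕ) : (S.toPerm ^ k) 1 = 1 :=
  Equiv.Perm.pow_apply_eq_self_of_apply_eq_self S.map_one' k

lemma pow_apply_mul (k : ℕ) (x y : A) :
    (S.toPerm ^ k) (x * y) = (S.toPerm ^ k) x * (S.toPerm ^ S.totalPower k x) y := by
  induction k with
  | zero => simp [totalPower]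
  | succ k ih =>
    rw [pow_succ', Equiv.Perm.mul_apply, Equiv.Perm.mul_apply, ih, S.skew, totalPower_succ,
      add_comm (S.totalPower k x), pow_add, Equiv.Perm.mul_apply]

lemma pow_totalPower_apply_inv (k : ℕ) (x : A) :
    (S.toPerm ^ S.totalPower k x) x⁻¹ = ((S.toPerm ^ k) x)⁻¹ :=
  eq_inv_of_mul_eq_one_right (by rw [← pow_apply_mul, mul_inv_cancel, pow_apply_one])

lemma pow_totalPower_congr {k m : ℕ} (h : S.toPerm ^ k = S.toPerm ^ m) (y : A) :
    S.toPerm ^ S.totalPower k y = S.toPerm ^ S.totalPower m y := by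
  ext z
  have hm := S.pow_apply_mul m y z
  rw [← h, S.pow_apply_mul] at hm
  exact mul_left_cancel hm

lemma pow_totalPower_of_forall {x : A} {ψ : Equiv.Perm A}
    (h : ∀ i, S.toPerm ^ S.pi ((S.toPerm ^ i) x) = ψ) (k : ℕ) :
    S.toPerm ^ S.totalPower k x = ψ ^ k := by
  induction k with
  | zero => simp [totalPower]
  | succ k ih => rw [totalPower_succ, pow_add, ih, h, pow_succ]

lemma pow_pi_mul (x y : A) :
    S.toPerm ^ S.pi (x * y) = S.toPerm ^ S.totalPower (S.pi x) y := by
  ext z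
  apply mul_left_cancel (a := S.toPerm x * (S.toPerm ^ S.pi x) y)
  rw [← S.skew x y, ← S.skew (x * y) z, mul_assoc x y z, S.skew x (y * z), S.pow_apply_mul,
    S.skew x y, mul_assoc]

lemma pow_pi_one : S.toPerm ^ S.pi 1 = S.toPerm := by
  ext y
  have h := S.skew 1 y
  rw [one_mul, S.map_one', one_mul] at h
  exact h.symm

lemma mem_ker_iff {a : A} : a ∈ S.ker ↔ S.toPerm ^ S.pi a = S.toPerm := by
  rw [ker, Set.mem_ofPred_eq, ← pow_eq_pow_iff_modEq, pow_one]

lemma pow_pi_eq_iff_mul_inv_mem_ker (x y : A) :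
    S.toPerm ^ S.pi y = S.toPerm ^ S.pi x ↔ y * x⁻¹ ∈ S.ker := by
  rw [mem_ker_iff]
  constructor
  · intro h
    rw [pow_pi_mul, S.pow_totalPower_congr h, ← pow_pi_mul, mul_inv_cancel, pow_pi_one]
  · intro h
    calc S.toPerm ^ S.pi y = S.toPerm ^ S.pi (y * x⁻¹ * x) := by rw [inv_mul_cancel_right]
      _ = S.toPerm ^ S.totalPower 1 x := by
        rw [pow_pi_mul, S.pow_totalPower_congr (h.trans (pow_one _).symm)]
      _ = S.toPerm ^ S.pi x := by rw [totalPower_one]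

def kerSubgroup : Subgroup A where
  carrier := S.ker
  one_mem' := S.mem_ker_iff.mpr S.pow_pi_one
  mul_mem' {a b} ha hb := by
    have hab := (S.pow_pi_eq_iff_mul_inv_mem_ker b (a * b)).mpr (by rwa [mul_inv_cancel_right])
    exact S.mem_ker_iff.mpr (hab.trans (S.mem_ker_iff.mp hb))
  inv_mem' {a} ha := by
    simpa using (S.pow_pi_eq_iff_mul_inv_mem_ker a 1).mp
      (S.pow_pi_one.trans (S.mem_ker_iff.mp ha).symm)

section Finite

variable [Finite A]

lemma mem_core_iff {a : A} : a ∈ S.core ↔ ∀ j : ℕ, (S.toPerm ^ j) a ∈ S.ker := by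
  set n := orderOf S.toPerm
  have hn : 0 < n := orderOf_pos _
  have hcycle : ∀ i j (b : A), i + j ≡ 0 [MOD n] → (S.toPerm ^ i) ((S.toPerm ^ j) b) = b := by
    intro i j b h
    rw [← Equiv.Perm.mul_apply, ← pow_add, pow_eq_pow_iff_modEq.mpr h, pow_zero,
      Equiv.Perm.one_apply]
  simp only [core, Set.mem_iInter₂, Finset.mem_Icc]
  constructor
  · intro h j
    have hj : j % n < n := Nat.mod_lt j hn
    obtain ⟨b, hb, rfl⟩ := h (n - j % n) ⟨by omega, by omega⟩
    have hsum : j + (n - j % n) ≡ 0 [MOD n] :=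
      calc j + (n - j % n) ≡ j % n + (n - j % n) [MOD n] := (Nat.mod_modEq j n).symm.add_right _
        _ = n := by omega
        _ ≡ 0 [MOD n] := Nat.modEq_zero_iff_dvd.mpr dvd_rfl
    rwa [hcycle _ _ b hsum]
  · intro h i hi
    exact ⟨_, h (n - i), hcycle i (n - i) a (Nat.modEq_zero_iff_dvd.mpr ⟨1, by omega⟩)⟩

lemma mem_ker_of_mem_core {a : A} (ha : a ∈ S.core) : a ∈ S.ker :=
  S.mem_core_iff.mp ha 0

lemma pow_apply_mem_core {a : A} (ha : a ∈ S.core) (k : ℕ) : (S.toPerm ^ k) a ∈ S.core :=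
  S.mem_core_iff.mpr fun j => by
    rw [← Equiv.Perm.mul_apply, ← pow_add]
    exact S.mem_core_iff.mp ha (j + k)

lemma pow_apply_mul_of_mem_core {a : A} (ha : a ∈ S.core) (k : ℕ) (y : A) :
    (S.toPerm ^ k) (a * y) = (S.toPerm ^ k) a * (S.toPerm ^ k) y := by
  rw [pow_apply_mul,
    S.pow_totalPower_of_forall (fun i => S.mem_ker_iff.mp (S.mem_core_iff.mp ha i))]

def coreSubgroup : Subgroup A where
  carrier := S.core
  one_mem' := S.mem_core_iff.mpr fun j => by
    rw [pow_apply_one]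
    exact S.kerSubgroup.one_mem
  mul_mem' {a b} ha hb := S.mem_core_iff.mpr fun j => by
    rw [S.pow_apply_mul_of_mem_core ha]
    exact S.kerSubgroup.mul_mem (S.mem_core_iff.mp ha j) (S.mem_core_iff.mp hb j)
  inv_mem' {a} ha := S.mem_core_iff.mpr fun j => by
    have h := S.pow_apply_mul_of_mem_core ha j a⁻¹
    rw [mul_inv_cancel, pow_apply_one] at h
    rw [eq_inv_of_mul_eq_one_right h.symm]
    exact S.kerSubgroup.inv_mem (S.mem_core_iff.mp ha j)

lemma mul_mul_inv_mem_ker_of_mem_core {a : A} (ha : a ∈ S.core) (g : A) :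
    g * a * g⁻¹ ∈ S.ker :=
  (S.pow_pi_eq_iff_mul_inv_mem_ker g (g * a)).mp <| by
    rw [pow_pi_mul, S.pow_totalPower_of_forall
      (fun i => S.mem_ker_iff.mp (S.mem_core_iff.mp ha i))]

/-- `φ^j (g a g⁻¹) = u a' u⁻¹` with `u = φ^j g` and `a' = φ^σ(g, j) a` again in the core. -/
lemma coreSubgroup_normal : S.coreSubgroup.Normal where
  conj_mem a ha g := S.mem_core_iff.mpr fun j => by
    rw [mul_assoc, S.pow_apply_mul, S.pow_apply_mul_of_mem_core ha, pow_totalPower_apply_inv,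
      ← mul_assoc]
    exact S.mul_mul_inv_mem_ker_of_mem_core (S.pow_apply_mem_core ha _) _

lemma image_mul_core_eq_iff (g x : A) :
    (g * ·) '' S.core = (x * ·) '' S.core ↔ g * x⁻¹ ∈ S.core := by
  have h := leftCoset_eq_iff S.coreSubgroup (x := x) (y := g)
  simp only [← smul_eq_mul, Set.image_smul]
  exact eq_comm.trans (h.trans S.coreSubgroup_normal.mem_comm_iff)

lemma mul_inv_mem_core_iff (x : A) :
    S.toPerm x * x⁻¹ ∈ S.core ↔
      ∀ i, S.toPerm ^ S.pi ((S.toPerm ^ i) x) = S.toPerm ^ S.pi x := by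
  have pow_apply_apply (i : ℕ) : (S.toPerm ^ i) (S.toPerm x) = (S.toPerm ^ (i + 1)) x := by
    rw [pow_succ, Equiv.Perm.mul_apply]
  constructor
  · intro hc i
    induction i with
    | zero => rfl
    | succ i ih =>
      have hstep : (S.toPerm ^ (i + 1)) x =
          (S.toPerm ^ i) (S.toPerm x * x⁻¹) * (S.toPerm ^ i) x := by
        rw [← S.pow_apply_mul_of_mem_core hc, inv_mul_cancel_right, pow_apply_apply]
      rw [← ih, S.pow_pi_eq_iff_mul_inv_mem_ker, hstep, mul_inv_cancel_right]
      exact S.mem_ker_of_mem_core (S.pow_apply_mem_core hc i)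
  · intro h
    refine S.mem_core_iff.mpr fun j => ?_
    have hσ : S.toPerm ^ S.totalPower j (S.toPerm x) = S.toPerm ^ S.totalPower j x := by
      rw [S.pow_totalPower_of_forall h, S.pow_totalPower_of_forall (fun i => by
        rw [pow_apply_apply, h])]
    rw [pow_apply_mul, hσ, pow_totalPower_apply_inv, pow_apply_apply,
      ← S.pow_pi_eq_iff_mul_inv_mem_ker, h, h]

end Finite

end SkewMorphism

theorem smooth_element_characterizations {A : Type*} [Group A] [Fintype A]
    (S : SkewMorphism A) (x : A) :
    (S.toPerm x * x⁻¹ ∈ S.core ↔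
      ∀ i : ℕ, S.pi ((S.toPerm ^ i) x) ≡ S.pi x [MOD orderOf S.toPerm]) ∧
    (S.toPerm x * x⁻¹ ∈ S.core ↔
      (S.toPerm x * ·) '' S.core = (x * ·) '' S.core) := by
  refine ⟨?_, (S.image_mul_core_eq_iff _ x).symm⟩
  simpa only [← pow_eq_pow_iff_modEq] using S.mul_inv_mem_core_iff x
end

section
/- Let φ be a skew-morphism of a finite group A of order n with power function π. Then φ is smooth (i.e. φ(x) ≡ x (mod Core φ) for all x ∈ A) if and only if π(φ(x)) = π(x) for all x ∈ A. -/
namespace SkewMorphism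

variable {A : Type*} [Group A] (S : SkewMorphism A)

/-- The iterated exponent sum `∑_{i<k} π(φ^i x)`. -/
def esum (k : ℕ) (x : A) : ℕ := ∑ i ∈ Finset.range k, S.pi ((S.toPerm ^ i) x)

lemma esum_zero (x : A) : S.esum 0 x = 0 := by simp [esum]

lemma esum_succ (k : ℕ) (x : A) :
    S.esum (k + 1) x = S.esum k x + S.pi ((S.toPerm ^ k) x) := by
  simp [esum, Finset.sum_range_succ]

lemma esum_one (x : A) : S.esum 1 x = S.pi x := by simp [esum]

lemma pow_apply_mul_s15 (a b : ℕ) (y : A) :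
    (S.toPerm ^ a) ((S.toPerm ^ b) y) = (S.toPerm ^ (a + b)) y := by
  rw [pow_add]; rfl

/-- Iterated skew-morphism formula: `φ^k (x y) = φ^k x ⋅ φ^{esum k x} y`. -/
lemma iter (k : ℕ) (x y : A) :
    (S.toPerm ^ k) (x * y) = (S.toPerm ^ k) x * (S.toPerm ^ S.esum k x) y := by
  induction k with
  | zero => simp [esum]
  | succ k ih =>
    have h1 : ∀ z : A, (S.toPerm ^ (k + 1)) z = S.toPerm ((S.toPerm ^ k) z) := by
      intro z; rw [pow_succ']; rfl
    rw [h1, ih, S.skew, h1, S.pow_apply_mul_s15, esum_succ, Nat.add_comm]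

lemma esum_add (a b : ℕ) (x : A) :
    S.esum (a + b) x = S.esum a x + S.esum b ((S.toPerm ^ a) x) := by
  induction b with
  | zero => simp [esum]
  | succ b ih =>
    rw [← Nat.add_assoc, esum_succ, ih, esum_succ, Nat.add_assoc, S.pow_apply_mul_s15,
      Nat.add_comm b a]

/-- If `φ^a` and `φ^b` agree pointwise then `a ≡ b (mod n)`. -/
lemma modEq_of_apply_eq {a b : ℕ} (h : ∀ z : A, (S.toPerm ^ a) z = (S.toPerm ^ b) z) :
    a ≡ b [MOD orderOf S.toPerm] := by
  rw [← pow_eq_pow_iff_modEq]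
  exact Equiv.ext h

/-- Fundamental congruence: `π(x y) ≡ ∑_{i<π(x)} π(φ^i y)`. -/
lemma pi_mul (x y : A) :
    S.pi (x * y) ≡ S.esum (S.pi x) y [MOD orderOf S.toPerm] := by
  apply S.modEq_of_apply_eq
  intro z
  have key : S.toPerm x * ((S.toPerm ^ S.pi x) y * (S.toPerm ^ S.pi (x * y)) z)
      = S.toPerm x * ((S.toPerm ^ S.pi x) y * (S.toPerm ^ S.esum (S.pi x) y) z) := by
    calc S.toPerm x * ((S.toPerm ^ S.pi x) y * (S.toPerm ^ S.pi (x * y)) z)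
        = (S.toPerm x * (S.toPerm ^ S.pi x) y) * (S.toPerm ^ S.pi (x * y)) z := by
          rw [mul_assoc]
      _ = S.toPerm (x * y) * (S.toPerm ^ S.pi (x * y)) z := by rw [← S.skew x y]
      _ = S.toPerm ((x * y) * z) := (S.skew _ _).symm
      _ = S.toPerm (x * (y * z)) := by rw [mul_assoc]
      _ = S.toPerm x * (S.toPerm ^ S.pi x) (y * z) := S.skew _ _
      _ = S.toPerm x * ((S.toPerm ^ S.pi x) y * (S.toPerm ^ S.esum (S.pi x) y) z) := by
          rw [S.iter]
  exact mul_left_cancel (mul_left_cancel key)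

/-- The sum over a full period is `≡ 0 (mod n)`. -/
lemma esum_orderOf (x : A) : S.esum (orderOf S.toPerm) x ≡ 0 [MOD orderOf S.toPerm] := by
  apply S.modEq_of_apply_eq
  intro z
  have h := S.iter (orderOf S.toPerm) x z
  rw [pow_orderOf_eq_one] at h
  simpa using h.symm

lemma esum_add_orderOf (k : ℕ) (x : A) :
    S.esum (k + orderOf S.toPerm) x ≡ S.esum k x [MOD orderOf S.toPerm] := by
  rw [S.esum_add]
  calc S.esum k x + S.esum (orderOf S.toPerm) ((S.toPerm ^ k) x)
      ≡ S.esum k x + 0 [MOD orderOf S.toPerm] :=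
        Nat.ModEq.add_left _ (S.esum_orderOf _)
    _ = S.esum k x := by rw [Nat.add_zero]

lemma esum_add_mul_orderOf (k m : ℕ) (x : A) :
    S.esum (k + m * orderOf S.toPerm) x ≡ S.esum k x [MOD orderOf S.toPerm] := by
  induction m with
  | zero => simp [Nat.ModEq.refl]
  | succ m ih =>
    have : k + (m + 1) * orderOf S.toPerm
        = (k + m * orderOf S.toPerm) + orderOf S.toPerm := by ring
    rw [this]
    exact (S.esum_add_orderOf _ x).trans ih

/-- `esum` only depends on `k` modulo `n`. -/
lemma esum_congr {k k' : ℕ} (h : k ≡ k' [MOD orderOf S.toPerm]) (x : A) :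
    S.esum k x ≡ S.esum k' x [MOD orderOf S.toPerm] := by
  rcases le_total k k' with hle | hle
  · obtain ⟨m, hm⟩ := (Nat.modEq_iff_dvd' hle).mp h
    have : k' = k + m * orderOf S.toPerm := by rw [Nat.mul_comm] at hm; omega
    rw [this]
    exact (S.esum_add_mul_orderOf k m x).symm
  · obtain ⟨m, hm⟩ := (Nat.modEq_iff_dvd' hle).mp h.symm
    have : k = k' + m * orderOf S.toPerm := by rw [Nat.mul_comm] at hm; omega
    rw [this]
    exact S.esum_add_mul_orderOf k' m x

lemma pi_one : S.pi 1 ≡ 1 [MOD orderOf S.toPerm] := by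
  apply S.modEq_of_apply_eq
  intro z
  have h := S.skew 1 z
  rw [one_mul, S.map_one', one_mul] at h
  rw [← h, pow_one]

/-- If `a ∈ ker`, then `π(a x) ≡ π(x)`. -/
lemma pi_ker_mul {a : A} (ha : a ∈ S.ker) (x : A) :
    S.pi (a * x) ≡ S.pi x [MOD orderOf S.toPerm] := by
  have h1 := S.pi_mul a x
  have h2 := S.esum_congr (ha : S.pi a ≡ 1 [MOD orderOf S.toPerm]) x
  rw [esum_one] at h2
  exact h1.trans h2

end SkewMorphism

theorem smooth_iff_pi_invariant {A : Type*} [Group A] [Fintype A] (S : SkewMorphism A) :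
    (∀ x : A, S.toPerm x * x⁻¹ ∈ S.core) ↔
      ∀ x : A, S.pi (S.toPerm x) ≡ S.pi x [MOD orderOf S.toPerm] := by
  have hnpos : 0 < orderOf S.toPerm := orderOf_pos S.toPerm
  constructor
  · intro h x
    have hw := h x
    rw [SkewMorphism.core, Set.mem_iInter₂] at hw
    have hmem := hw (orderOf S.toPerm) (Finset.mem_Icc.mpr ⟨hnpos, le_refl _⟩)
    rw [pow_orderOf_eq_one] at hmem
    obtain ⟨b, hb, hbe⟩ := hmem
    have hbw : b = S.toPerm x * x⁻¹ := by simpa using hbe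
    rw [hbw] at hb
    have := S.pi_ker_mul hb x
    rwa [inv_mul_cancel_right] at this
  · intro h x
    -- first: π(φ^i y) ≡ π y for all i
    have hiter : ∀ (i : ℕ) (y : A), S.pi ((S.toPerm ^ i) y) ≡ S.pi y [MOD orderOf S.toPerm] := by
      intro i
      induction i with
      | zero => intro y; simp [Nat.ModEq.refl]
      | succ i ih =>
        intro y
        have h1 : ((S.toPerm ^ (i + 1)) y) = (S.toPerm ^ i) (S.toPerm y) := by
          rw [pow_succ]; rfl
        rw [h1]
        exact (ih (S.toPerm y)).trans (h y)
    -- esum k y ≡ k * π y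
    have hesum : ∀ (k : ℕ) (y : A), S.esum k y ≡ k * S.pi y [MOD orderOf S.toPerm] := by
      intro k y
      induction k with
      | zero => simp [S.esum_zero, Nat.ModEq.refl]
      | succ k ih =>
        rw [S.esum_succ, Nat.succ_mul]
        exact Nat.ModEq.add ih (hiter k y)
    -- multiplicativity: π(x y) ≡ π x * π y
    have hmulpi : ∀ x y : A, S.pi (x * y) ≡ S.pi x * S.pi y [MOD orderOf S.toPerm] := by
      intro x y
      exact (S.pi_mul x y).trans (hesum (S.pi x) y)
    -- π x * π x⁻¹ ≡ 1
    have hinv : ∀ x : A, S.pi x * S.pi x⁻¹ ≡ 1 [MOD orderOf S.toPerm] := by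
      intro x
      have := (hmulpi x x⁻¹).symm
      rw [mul_inv_cancel] at this
      exact this.trans S.pi_one
    -- w := φ x * x⁻¹ ∈ ker
    have hker : S.toPerm x * x⁻¹ ∈ S.ker := by
      have h1 : S.pi (S.toPerm x * x⁻¹) ≡ S.pi (S.toPerm x) * S.pi x⁻¹ [MOD orderOf S.toPerm] :=
        hmulpi _ _
      have h2 : S.pi (S.toPerm x) * S.pi x⁻¹ ≡ S.pi x * S.pi x⁻¹ [MOD orderOf S.toPerm] :=
        Nat.ModEq.mul (h x) (Nat.ModEq.refl _)
      exact (h1.trans h2).trans (hinv x)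
    rw [SkewMorphism.core, Set.mem_iInter₂]
    intro i hi
    rw [Finset.mem_Icc] at hi
    refine ⟨(S.toPerm ^ (orderOf S.toPerm - i)) (S.toPerm x * x⁻¹), ?_, ?_⟩
    · exact (hiter (orderOf S.toPerm - i) _).trans hker
    · rw [S.pow_apply_mul_s15]
      have : i + (orderOf S.toPerm - i) = orderOf S.toPerm := by omega
      rw [this, pow_orderOf_eq_one, Equiv.Perm.one_apply]
end

section
/- Let φ be a smooth skew-morphism of a finite group A of order n with power function π. Then π is a group homomorphism from A to the multiplicative group of units (Z/nZ)^*, and its kernel as a homomorphism equals Ker φ. -/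
/-- Iterate formula for skew-morphisms:
`φ^a (x y) = φ^a x * φ^(∑_{i<a} π(φ^i x)) y`. -/
lemma SkewMorphism.pow_skew {A : Type*} [Group A] (S : SkewMorphism A) (a : ℕ) (x y : A) :
    (S.toPerm ^ a) (x * y) =
      (S.toPerm ^ a) x *
        (S.toPerm ^ (∑ i ∈ Finset.range a, S.pi ((S.toPerm ^ i) x))) y := by
  induction a with
  | zero => simp
  | succ a ih =>
    rw [pow_succ', Equiv.Perm.mul_apply, ih, S.skew, Finset.sum_range_succ,
      ← Equiv.Perm.mul_apply (S.toPerm ^ S.pi ((S.toPerm ^ a) x)), ← pow_add,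
      ← Equiv.Perm.mul_apply S.toPerm, ← pow_succ']
    rw [Nat.add_comm (S.pi ((S.toPerm ^ a) x))]

/-- Under smoothness, `π (φ^i x) ≡ π x`. -/
lemma SkewMorphism.pi_pow_iter {A : Type*} [Group A] (S : SkewMorphism A)
    (hsmooth : ∀ x : A, S.pi (S.toPerm x) ≡ S.pi x [MOD orderOf S.toPerm])
    (i : ℕ) (x : A) : S.pi ((S.toPerm ^ i) x) ≡ S.pi x [MOD orderOf S.toPerm] := by
  induction i with
  | zero => exact Nat.ModEq.refl _
  | succ i ih =>
    rw [pow_succ', Equiv.Perm.mul_apply]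
    exact (hsmooth _).trans ih

lemma SkewMorphism.sum_pi_iter {A : Type*} [Group A] (S : SkewMorphism A)
    (hsmooth : ∀ x : A, S.pi (S.toPerm x) ≡ S.pi x [MOD orderOf S.toPerm])
    (a : ℕ) (x : A) :
    (∑ i ∈ Finset.range a, S.pi ((S.toPerm ^ i) x)) ≡ a * S.pi x [MOD orderOf S.toPerm] := by
  induction a with
  | zero => simp; exact Nat.ModEq.refl _
  | succ a ih =>
    rw [Finset.sum_range_succ, Nat.succ_mul]
    exact ih.add (S.pi_pow_iter hsmooth a x)

lemma SkewMorphism.pi_one_modEq {A : Type*} [Group A] (S : SkewMorphism A) :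
    S.pi 1 ≡ 1 [MOD orderOf S.toPerm] := by
  have h : S.toPerm ^ S.pi 1 = S.toPerm ^ 1 := by
    ext y
    have := S.skew 1 y
    rw [S.map_one', one_mul, one_mul] at this
    simp [← this]
  exact pow_eq_pow_iff_modEq.mp h

/-- Under smoothness, `π (x y) ≡ π x * π y`. -/
lemma SkewMorphism.pi_mul_modEq {A : Type*} [Group A] (S : SkewMorphism A)
    (hsmooth : ∀ x : A, S.pi (S.toPerm x) ≡ S.pi x [MOD orderOf S.toPerm])
    (x y : A) : S.pi (x * y) ≡ S.pi x * S.pi y [MOD orderOf S.toPerm] := by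
  have key : S.toPerm ^ S.pi (x * y) =
      S.toPerm ^ (∑ i ∈ Finset.range (S.pi x), S.pi ((S.toPerm ^ i) y)) := by
    ext z
    have h1 : S.toPerm (x * y * z) = S.toPerm (x * y) * (S.toPerm ^ S.pi (x * y)) z :=
      S.skew (x * y) z
    have h2 : S.toPerm (x * (y * z)) = S.toPerm (x * y) *
        (S.toPerm ^ (∑ i ∈ Finset.range (S.pi x), S.pi ((S.toPerm ^ i) y))) z := by
      rw [S.skew x (y * z), S.pow_skew, ← mul_assoc, ← S.skew x y]
    rw [mul_assoc] at h1
    exact mul_left_cancel (h1.symm.trans h2)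
  exact (pow_eq_pow_iff_modEq.mp key).trans (S.sum_pi_iter hsmooth (S.pi x) y)

theorem smooth_pi_is_homomorphism {A : Type*} [Group A] [Fintype A] (S : SkewMorphism A)
    (hsmooth : ∀ x : A, S.pi (S.toPerm x) ≡ S.pi x [MOD orderOf S.toPerm]) :
    ∃ f : A →* (ZMod (orderOf S.toPerm))ˣ,
      (∀ x : A, ((f x : (ZMod (orderOf S.toPerm))ˣ) : ZMod (orderOf S.toPerm)) =
        (S.pi x : ZMod (orderOf S.toPerm))) ∧
      (∀ x : A, f x = 1 ↔ x ∈ S.ker) := by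
  set n := orderOf S.toPerm with hn
  have hmod : ∀ a b : ℕ, a ≡ b [MOD n] → ((a : ZMod n) = (b : ZMod n)) := fun a b h =>
    (ZMod.natCast_eq_natCast_iff a b n).mpr h
  let f0 : A →* ZMod n :=
    { toFun := fun x => (S.pi x : ZMod n)
      map_one' := by
        have := hmod _ _ (S.pi_one_modEq)
        simpa using this
      map_mul' := fun x y => by
        have := hmod _ _ (S.pi_mul_modEq hsmooth x y)
        simpa using this }
  refine ⟨f0.toHomUnits, fun x => rfl, fun x => ?_⟩
  rw [Units.ext_iff, MonoidHom.coe_toHomUnits, Units.val_one]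
  show (S.pi x : ZMod n) = 1 ↔ _
  rw [show (1 : ZMod n) = ((1 : ℕ) : ZMod n) by simp]
  simp only [SkewMorphism.ker, Set.mem_setOf_eq]
  exact ZMod.natCast_eq_natCast_iff _ _ _
end
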